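/- arXiv:1307.7504 — 4 statements merged into one kernel-verified Lean document; each statement's English description precedes it below -/
import Mathlib

section
/- Let Δ ⊆ ℝ^d be a compact set and let g_1, …, g_s : ℝ^d → ℝ^d be C¹ diffeomorphisms with g_i(Δ) = Δ for all i, such that the action semigroup generated by g_1, …, g_s is minimal on Δ (every nonempty closed subset K ⊆ Δ with g_i(K) ⊆ K for all i equals Δ). If B ⊆ Δ is a Lebesgue measurable set with g_i(B) = B for all i and vol(B) > 0, then the set of Lebesgue density points of B is dense in Δ. -/
open MeasureTheory Filter Set

/-! The measure-theoretic support `S` of `volume.restrict B` is closed, nonempty (as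
`vol B > 0`) and contained in `Δ`. Each `g i` is continuous, preserves `B`, and pulls null
sets back to null sets because `(g i)⁻¹` is `C¹`; hence `g i` maps `S` into itself, and
minimality forces `S = Δ`. Since almost every point of `B` is a density point, every point
of the support is a limit of density points. -/

namespace MeasureTheory.Measure

variable {X Y : Type*} [TopologicalSpace X] [MeasurableSpace X]
  [TopologicalSpace Y] [MeasurableSpace Y]

theorem mapsTo_support_of_quasiMeasurePreserving {μ : Measure X} {ν : Measure Y} {f : X → Y}
    (hf : Continuous f) (hqmp : QuasiMeasurePreserving f μ ν) :
    MapsTo f μ.support ν.support := by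
  intro x hx
  rw [mem_support_iff_forall] at hx ⊢
  intro U hU
  refine pos_iff_ne_zero.2 fun hνU => ?_
  exact (hx _ (hf.continuousAt.preimage_mem_nhds hU)).ne' (hqmp.preimage_null hνU)

theorem support_subset_closure_of_ae {μ : Measure X} {p : X → Prop} (hp : ∀ᵐ x ∂μ, p x) :
    μ.support ⊆ closure {x | p x} :=
  support_subset_of_isClosed isClosed_closure (mem_of_superset hp subset_closure)

end MeasureTheory.Measure

section AddHaar

open Metric Topology Measure

variable {E : Type*} [NormedAddCommGroup E] [NormedSpace ℝ E] [MeasurableSpace E] [BorelSpace E]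
  [FiniteDimensional ℝ E] (μ : Measure E) [μ.IsAddHaarMeasure]

theorem closedBall_ae_eq_ball {x : E} {r : ℝ} (hr : r ≠ 0) : closedBall x r =ᵐ[μ] ball x r := by
  rw [← ball_union_sphere]
  exact union_ae_eq_left_of_ae_eq_empty (ae_eq_empty.2 (Measure.addHaar_sphere_of_ne_zero μ x hr))

theorem ae_tendsto_measure_inter_ball_div (s : Set E) :
    ∀ᵐ x ∂μ.restrict s,
      Tendsto (fun r => μ (s ∩ ball x r) / μ (ball x r)) (𝓝[>] 0) (𝓝 1) := by
  filter_upwards [Besicovitch.ae_tendsto_measure_inter_div μ s] with x hx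
  refine hx.congr' ?_
  filter_upwards [self_mem_nhdsWithin] with r (hr : 0 < r)
  have hball := closedBall_ae_eq_ball μ (x := x) hr.ne'
  rw [measure_congr hball, measure_congr ((ae_eq_refl s).inter hball)]

theorem Homeomorph.quasiMeasurePreserving_of_differentiable_symm (f : E ≃ₜ E)
    (hf : Differentiable ℝ f.symm) : QuasiMeasurePreserving f μ μ where
  measurable := f.continuous.measurable
  absolutelyContinuous := Measure.AbsolutelyContinuous.mk fun N hN hμN => by
    rw [Measure.map_apply f.continuous.measurable hN, ← f.image_symm]
    exact addHaar_image_eq_zero_of_differentiableOn_of_addHaar_eq_zero μ hf.differentiableOn hμN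

end AddHaar

theorem stmt_1_general {d s : ℕ}
    (Δ : Set (EuclideanSpace ℝ (Fin d))) (hΔ : IsCompact Δ)
    (g : Fin s → (EuclideanSpace ℝ (Fin d)) ≃ₜ (EuclideanSpace ℝ (Fin d)))
    (hg' : ∀ i, ContDiff ℝ 1 (g i).symm)
    (hmin : ∀ K : Set (EuclideanSpace ℝ (Fin d)),
      K ⊆ Δ → IsClosed K → K.Nonempty → (∀ i, g i '' K ⊆ K) → K = Δ)
    (B : Set (EuclideanSpace ℝ (Fin d))) (hBΔ : B ⊆ Δ)
    (hBinv : ∀ i, g i '' B = B) (hBpos : 0 < volume B) :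
    Δ ⊆ closure {x : EuclideanSpace ℝ (Fin d) |
      Tendsto (fun r : ℝ => volume (B ∩ Metric.ball x r) / volume (Metric.ball x r))
        (nhdsWithin 0 (Ioi 0)) (nhds 1)} := by
  set ν := volume.restrict B
  have hsupp_sub : ν.support ⊆ Δ :=
    Measure.support_restrict_subset.trans <|
      inter_subset_left.trans (closure_minimal hBΔ hΔ.isClosed)
  have hν : ν ≠ 0 := by
    rw [Ne, Measure.restrict_eq_zero]
    exact hBpos.ne'
  have hinv : ∀ i, g i '' ν.support ⊆ ν.support := fun i =>
    (Measure.mapsTo_support_of_quasiMeasurePreserving (g i).continuous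
      ((Homeomorph.quasiMeasurePreserving_of_differentiable_symm volume (g i)
        ((hg' i).differentiable one_ne_zero)).restrict
          (mapsTo_iff_image_subset.2 (hBinv i).subset))).image_subset
  rw [← hmin _ hsupp_sub Measure.isClosed_support (Measure.nonempty_support hν) hinv]
  exact Measure.support_subset_closure_of_ae (ae_tendsto_measure_inter_ball_div volume B)

/-- Let `Δ ⊆ ℝ^d` be compact and invariant under `C¹` diffeomorphisms
`g 1, …, g s` whose action semigroup is minimal on `Δ`.  If `B ⊆ Δ` is measurable,
invariant under every `g i`, and of positive volume, then the set of Lebesgue density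
points of `B` is dense in `Δ`. -/
theorem stmt_1 {d s : ℕ}
    (Δ : Set (EuclideanSpace ℝ (Fin d))) (hΔ : IsCompact Δ)
    (g : Fin s → (EuclideanSpace ℝ (Fin d)) ≃ₜ (EuclideanSpace ℝ (Fin d)))
    (hg : ∀ i, ContDiff ℝ 1 (g i)) (hg' : ∀ i, ContDiff ℝ 1 (g i).symm)
    (hginv : ∀ i, g i '' Δ = Δ)
    (hmin : ∀ K : Set (EuclideanSpace ℝ (Fin d)),
      K ⊆ Δ → IsClosed K → K.Nonempty → (∀ i, g i '' K ⊆ K) → K = Δ)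
    (B : Set (EuclideanSpace ℝ (Fin d))) (hBmeas : MeasurableSet B) (hBΔ : B ⊆ Δ)
    (hBinv : ∀ i, g i '' B = B) (hBpos : 0 < volume B) :
    Δ ⊆ closure {x : EuclideanSpace ℝ (Fin d) |
      Tendsto (fun r : ℝ => volume (B ∩ Metric.ball x r) / volume (Metric.ball x r))
        (nhdsWithin 0 (Ioi 0)) (nhds 1)} :=
  stmt_1_general Δ hΔ g hg' hmin B hBΔ hBinv hBpos
end

section
/- Hutchinson attractor: let X be a nonempty complete metric space and let h_1, …, h_k : X → X be contractions (each Lipschitz with constant strictly less than 1). Then there exists a unique nonempty compact set Δ ⊆ X such that Δ = h_1(Δ) ∪ … ∪ h_k(Δ). In particular, every nonempty compact set K ⊆ X with K = h_1(K) ∪ … ∪ h_k(K) equals Δ. -/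
/-!
The Hutchinson operator `K ↦ ⋃ i, h i '' K` maps nonempty compact sets to nonempty compact sets,
and a `c`-Lipschitz map moves Hausdorff distances by at most the factor `c`; so, if all `h i` are
`c`-Lipschitz with `c < 1`, the operator is a contraction of the space of nonempty compact sets
with the Hausdorff metric. That space is complete, and the attractor is the Banach fixed point.
-/

open Set Metric

theorem LipschitzWith.infEDist_image_le {α β : Type*} [PseudoEMetricSpace α]
    [PseudoEMetricSpace β] {K : NNReal} {f : α → β} (hf : LipschitzWith K f) (x : α)
    {t : Set α} (ht : t.Nonempty) :
    infEDist (f x) (f '' t) ≤ K * infEDist x t := by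
  have := ht.to_subtype
  rw [infEDist, infEDist, iInf_image, iInf_subtype', iInf_subtype', ENNReal.mul_iInf (by simp)]
  exact iInf_mono fun y => hf x y

theorem LipschitzWith.hausdorffEDist_image_le {α β : Type*} [PseudoEMetricSpace α]
    [PseudoEMetricSpace β] {K : NNReal} {f : α → β} (hf : LipschitzWith K f)
    {s t : Set α} (hs : s.Nonempty) (ht : t.Nonempty) :
    hausdorffEDist (f '' s) (f '' t) ≤ K * hausdorffEDist s t := by
  refine hausdorffEDist_le_of_infEDist (forall_mem_image.2 fun x hx => ?_)
    (forall_mem_image.2 fun x hx => ?_)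
  · exact (hf.infEDist_image_le x ht).trans (by gcongr; exact infEDist_le_hausdorffEDist_of_mem hx)
  · rw [hausdorffEDist_comm]
    exact (hf.infEDist_image_le x hs).trans (by gcongr; exact infEDist_le_hausdorffEDist_of_mem hx)

namespace TopologicalSpace.NonemptyCompacts

variable {ι X : Type*} [Finite ι] [Nonempty ι]

def hutchinson [TopologicalSpace X] (h : ι → X → X) (hh : ∀ i, Continuous (h i))
    (K : NonemptyCompacts X) : NonemptyCompacts X where
  carrier := ⋃ i, h i '' K
  isCompact' := isCompact_iUnion fun i => K.isCompact.image (hh i)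
  nonempty' := nonempty_iUnion.2 ⟨Classical.arbitrary ι, K.nonempty.image _⟩

theorem isFixedPt_hutchinson_iff [TopologicalSpace X] {h : ι → X → X}
    {hh : ∀ i, Continuous (h i)} {K : NonemptyCompacts X} :
    Function.IsFixedPt (hutchinson h hh) K ↔ (K : Set X) = ⋃ i, h i '' K := by
  rw [Function.IsFixedPt, ← SetLike.coe_set_eq, eq_comm]
  rfl

theorem contractingWith_hutchinson [EMetricSpace X] {h : ι → X → X} {c : NNReal} (hc : c < 1)
    (hlip : ∀ i, LipschitzWith c (h i)) :
    ContractingWith c (hutchinson h fun i => (hlip i).continuous) := by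
  refine ⟨hc, fun s t => ?_⟩
  calc hausdorffEDist (⋃ i, h i '' s) (⋃ i, h i '' t)
      ≤ ⨆ i, hausdorffEDist (h i '' s) (h i '' t) := hausdorffEDist_iUnion_le
    _ ≤ c * hausdorffEDist (s : Set X) t :=
      iSup_le fun i => (hlip i).hausdorffEDist_image_le s.nonempty t.nonempty

end TopologicalSpace.NonemptyCompacts

open TopologicalSpace.NonemptyCompacts in
theorem existsUnique_nonempty_isCompact_eq_iUnion_image {ι X : Type*} [Finite ι] [Nonempty ι]
    [MetricSpace X] [CompleteSpace X] [Nonempty X]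
    {h : ι → X → X} {c : NNReal} (hc : c < 1) (hlip : ∀ i, LipschitzWith c (h i)) :
    ∃! Δ : Set X, Δ.Nonempty ∧ IsCompact Δ ∧ Δ = ⋃ i, h i '' Δ := by
  have hT := contractingWith_hutchinson hc hlip
  refine ⟨hT.fixedPoint, ⟨hT.fixedPoint.nonempty, hT.fixedPoint.isCompact,
    isFixedPt_hutchinson_iff.1 hT.fixedPoint_isFixedPt⟩, ?_⟩
  rintro S ⟨hSne, hSc, hS⟩
  exact congrArg SetLike.coe
    (hT.fixedPoint_unique (x := ⟨⟨S, hSc⟩, hSne⟩) (isFixedPt_hutchinson_iff.2 hS))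

/-- Hutchinson attractor.  Contractions `h 1, …, h k` (`k ≥ 1`) of a nonempty
complete metric space admit a unique nonempty compact set `Δ` with
`Δ = h 1 '' Δ ∪ … ∪ h k '' Δ`. -/
theorem stmt_6 {X : Type*} [MetricSpace X] [CompleteSpace X] [Nonempty X] {k : ℕ}
    (hk : 0 < k) (h : Fin k → X → X) (ξ : Fin k → NNReal)
    (hξ : ∀ i, ξ i < 1) (hlip : ∀ i, LipschitzWith (ξ i) (h i)) :
    ∃! Δ : Set X, Δ.Nonempty ∧ IsCompact Δ ∧ Δ = ⋃ i, h i '' Δ := by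
  have : Nonempty (Fin k) := ⟨⟨0, hk⟩⟩
  refine existsUnique_nonempty_isCompact_eq_iUnion_image
    (c := Finset.univ.sup ξ) ?_ fun i => (hlip i).weaken (Finset.le_sup (Finset.mem_univ i))
  exact (Finset.sup_lt_iff (by simp)).2 fun i _ => hξ i
end

section
/- Let X be a nonempty complete metric space, let h_1, …, h_k : X → X be contractions, and let Δ be the Hutchinson attractor of the family. If K ⊆ X is a compact set satisfying K ⊆ h_1(K) ∪ … ∪ h_k(K), then K ⊆ Δ. In particular, if a nonempty open set V satisfies closure(V) ⊆ h_1(V) ∪ … ∪ h_k(V) and closure(V) is compact, then the attractor Δ has nonempty interior. -/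
open Set Metric

/-!
Each `h i` maps `Δ` into itself, so it contracts the distance to `Δ` by the factor `ξ i`.
At a point of `K` where the distance to `Δ` is maximal, that point is `h i y` for some `y ∈ K`,
so the maximum `M` satisfies `M ≤ ξ i * M` with `ξ i < 1`, forcing `M = 0`. Applied to
`K = closure V`, this puts the open set `V` inside `Δ`.
-/

theorem LipschitzWith.infDist_le_mul_of_mapsTo {X : Type*} [PseudoMetricSpace X] {f : X → X}
    {K : NNReal} {s : Set X} (hf : LipschitzWith K f) (hs : MapsTo f s s) (x : X) :
    infDist (f x) s ≤ K * infDist x s := by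
  rcases s.eq_empty_or_nonempty with rfl | hne
  · simp
  have : Nonempty s := hne.to_subtype
  calc infDist (f x) s ≤ ⨅ z : s, K * dist x z :=
        le_ciInf fun z => (infDist_le_dist_of_mem (hs z.2)).trans (hf.dist_le_mul x z)
    _ = K * infDist x s := by rw [infDist_eq_iInf, Real.mul_iInf_of_nonneg K.coe_nonneg]

theorem IsCompact.subset_of_subset_iUnion_image_of_lipschitz {X ι : Type*} [PseudoMetricSpace X]
    {h : ι → X → X} {ξ : ι → NNReal} (hξ : ∀ i, ξ i < 1) (hlip : ∀ i, LipschitzWith (ξ i) (h i))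
    {Δ : Set X} (hΔ : IsClosed Δ) (hΔne : Δ.Nonempty) (hΔmaps : ∀ i, MapsTo (h i) Δ Δ)
    {K : Set X} (hK : IsCompact K) (hKsub : K ⊆ ⋃ i, h i '' K) : K ⊆ Δ := by
  rcases K.eq_empty_or_nonempty with rfl | hKne
  · exact empty_subset Δ
  obtain ⟨x₀, hx₀K, hmax⟩ := hK.exists_isMaxOn hKne (continuous_infDist_pt Δ).continuousOn
  have hx₀ : infDist x₀ Δ = 0 := by
    obtain ⟨i, y, hyK, rfl⟩ : ∃ i, ∃ y ∈ K, h i y = x₀ := by simpa using hKsub hx₀K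
    have hle : infDist (h i y) Δ ≤ ξ i * infDist (h i y) Δ :=
      ((hlip i).infDist_le_mul_of_mapsTo (hΔmaps i) y).trans
        (mul_le_mul_of_nonneg_left (hmax hyK) (ξ i).coe_nonneg)
    nlinarith [infDist_nonneg (x := h i y) (s := Δ), NNReal.coe_lt_one.2 (hξ i)]
  intro x hx
  rw [← hΔ.closure_eq, mem_closure_iff_infDist_zero hΔne]
  exact le_antisymm ((hmax hx).trans hx₀.le) infDist_nonneg

theorem stmt_9_general {X : Type*} [MetricSpace X] {k : ℕ}
    (h : Fin k → X → X) (ξ : Fin k → NNReal)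
    (hξ : ∀ i, ξ i < 1) (hlip : ∀ i, LipschitzWith (ξ i) (h i))
    (Δ : Set X) (hΔne : Δ.Nonempty) (hΔc : IsCompact Δ)
    (hΔfix : Δ = ⋃ i, h i '' Δ) :
    (∀ K : Set X, IsCompact K → K ⊆ ⋃ i, h i '' K → K ⊆ Δ) ∧
    (∀ V : Set X, IsOpen V → V.Nonempty → IsCompact (closure V) →
      closure V ⊆ ⋃ i, h i '' V → (interior Δ).Nonempty) := by
  have hΔmaps : ∀ i, MapsTo (h i) Δ Δ := fun i =>
    mapsTo_iff_image_subset.2 ((subset_iUnion (fun j => h j '' Δ) i).trans hΔfix.symm.subset)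
  have hsub_Δ : ∀ K : Set X, IsCompact K → K ⊆ ⋃ i, h i '' K → K ⊆ Δ := fun _ hK hKsub =>
    hK.subset_of_subset_iUnion_image_of_lipschitz hξ hlip hΔc.isClosed hΔne hΔmaps hKsub
  refine ⟨hsub_Δ, fun V hVo hVne hVc hVsub => ?_⟩
  have hclosure : closure V ⊆ ⋃ i, h i '' closure V :=
    hVsub.trans (iUnion_mono fun i => image_mono subset_closure)
  exact hVne.mono (interior_maximal (subset_closure.trans (hsub_Δ _ hVc hclosure)) hVo)

/-- if `Δ` is the Hutchinson attractor of contractions `h 1, …, h k` of a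
nonempty complete metric space, then every compact set `K` with `K ⊆ ⋃ i, h i '' K` is
contained in `Δ`; in particular, if a nonempty open set `V` with compact closure satisfies
`closure V ⊆ ⋃ i, h i '' V`, then `Δ` has nonempty interior. -/
theorem stmt_9 {X : Type*} [MetricSpace X] [CompleteSpace X] [Nonempty X] {k : ℕ}
    (h : Fin k → X → X) (ξ : Fin k → NNReal)
    (hξ : ∀ i, ξ i < 1) (hlip : ∀ i, LipschitzWith (ξ i) (h i))
    (Δ : Set X) (hΔne : Δ.Nonempty) (hΔc : IsCompact Δ)
    (hΔfix : Δ = ⋃ i, h i '' Δ) :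
    (∀ K : Set X, IsCompact K → K ⊆ ⋃ i, h i '' K → K ⊆ Δ) ∧
    (∀ V : Set X, IsOpen V → V.Nonempty → IsCompact (closure V) →
      closure V ⊆ ⋃ i, h i '' V → (interior Δ).Nonempty) :=
  stmt_9_general h ξ hξ hlip Δ hΔne hΔc hΔfix
end

section
/- Exclusion of Lebesgue density points on the attractor: let h_1, …, h_k : ℝ² → ℝ² be contracting similarities (h_i(x) = κ_i A_i x + b_i with κ_i ∈ (0,1) and A_i orthogonal), let U be an open ball with h_i(U) ⊆ U for every i, and let Δ ⊆ closure(U) be the Hutchinson attractor of the family. Let B ⊆ ℝ² be Lebesgue measurable with h_i(B) = B for every i. If vol(U \ B) > 0, then no point p ∈ Δ is a Lebesgue density point of B; in fact there is a constant c > 0 (depending only on min_i κ_i and vol(U \ B)/vol(U)) such that vol(B(p,δ) \ B) ≥ c · vol(B(p,δ)) for every p ∈ Δ and every sufficiently small δ > 0. -/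
/-!
Every point `p` of the attractor lies in a cylinder `f(Δ)`, where `f = h_{i₁} ∘ ⋯ ∘ h_{iₙ}` is a
similarity whose ratio `r` can be chosen comparable to any small scale `δ`: stop the first time
the ratio drops below `δ / 2R`, so that `r > κ_min δ / 2R`. Then `f(U)` is a ball of radius `rR`
whose closure contains `p`, hence `f(U) ⊆ B(p, δ)`. Since `f` is injective and `f(B) = B`, the
set `f(U \ B) = f(U) \ B` lies in `B(p, δ) \ B` and has volume `r² vol(U \ B) ≳ δ² vol(U \ B)`.
-/

open Set MeasureTheory Filter Metric Module

section Similarity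

variable {E : Type*} [NormedAddCommGroup E] [InnerProductSpace ℝ E]

def IsSimilarityWith (r : ℝ) (f : E → E) : Prop :=
  ∃ (L : E ≃ₗᵢ[ℝ] E) (c : E), ∀ x, f x = r • L x + c

namespace IsSimilarityWith

variable {r r' : ℝ} {f g : E → E}

theorem id : IsSimilarityWith 1 (id : E → E) :=
  ⟨LinearIsometryEquiv.refl ℝ E, 0, fun x => by simp⟩

theorem comp (hf : IsSimilarityWith r f) (hg : IsSimilarityWith r' g) :
    IsSimilarityWith (r * r') (f ∘ g) := by
  obtain ⟨L, c, hL⟩ := hf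
  obtain ⟨M, d, hM⟩ := hg
  refine ⟨M.trans L, r • L d + c, fun x => ?_⟩
  simp only [Function.comp_apply, hL, hM, map_add, map_smul, LinearIsometryEquiv.trans_apply,
    mul_smul, smul_add]
  abel

theorem dist_eq (hf : IsSimilarityWith r f) (x y : E) : dist (f x) (f y) = |r| * dist x y := by
  obtain ⟨L, c, hL⟩ := hf
  rw [hL, hL, dist_add_right, dist_smul₀, L.dist_map, Real.norm_eq_abs]

theorem injective (hf : IsSimilarityWith r f) (hr : r ≠ 0) : Function.Injective f := by
  intro x y hxy
  have h := hf.dist_eq x y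
  rw [hxy, dist_self] at h
  exact dist_eq_zero.1 ((mul_eq_zero.1 h.symm).resolve_left (abs_ne_zero.2 hr))

variable [FiniteDimensional ℝ E] [MeasurableSpace E] [BorelSpace E]

theorem volume_image (hf : IsSimilarityWith r f) (s : Set E) :
    volume (f '' s) = ENNReal.ofReal (|r| ^ finrank ℝ E) * volume s := by
  obtain ⟨L, c, hL⟩ := hf
  have hfL : f = (· + c) ∘ (r • ·) ∘ L := funext hL
  rw [hfL, image_comp, image_comp, image_smul, image_add_right, measure_preimage_add_right,
    Measure.addHaar_smul, abs_pow, L.image_eq_preimage_symm]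
  congr 1
  exact L.symm.measurePreserving.measure_preimage_equiv (f := L.symm.toMeasurableEquiv) s

theorem volume_ball_diff_le (hf : IsSimilarityWith r f) (hr : 0 < r) {B : Set E}
    (hfB : f '' B = B) {c₀ p : E} {R δ : ℝ} (hp : p ∈ f '' closedBall c₀ R)
    (hδ : 2 * (r * R) ≤ δ) :
    ENNReal.ofReal (r ^ finrank ℝ E) * volume (ball c₀ R \ B) ≤ volume (ball p δ \ B) := by
  obtain ⟨x, hx, rfl⟩ := hp
  have himage := hf.volume_image (ball c₀ R \ B)
  rw [abs_of_pos hr] at himage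
  rw [← himage]
  refine measure_mono ?_
  rintro _ ⟨z, ⟨hz, hzB⟩, rfl⟩
  refine ⟨?_, fun hfz => hzB ?_⟩
  · have hzx : dist z x < 2 * R := by
      linarith [dist_triangle_right z x c₀, mem_ball.1 hz, mem_closedBall.1 hx]
    rw [mem_ball, hf.dist_eq, abs_of_pos hr]
    calc r * dist z x < r * (2 * R) := by gcongr
      _ ≤ δ := by linarith
  · rw [← hfB] at hfz
    obtain ⟨w, hw, hwz⟩ := hfz
    rwa [← hf.injective hr.ne' hwz]

end IsSimilarityWith

end Similarity

theorem Matrix.isSimilarityWith_of_mem_orthogonalGroup {n : Type*} [Fintype n] [DecidableEq n]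
    {A : Matrix n n ℝ} (hA : A ∈ orthogonalGroup n ℝ) {κ : ℝ} {b : EuclideanSpace ℝ n}
    {f : EuclideanSpace ℝ n → EuclideanSpace ℝ n}
    (hf : ∀ x, f x = κ • toEuclideanLin A x + b) : IsSimilarityWith κ f :=
  ⟨Unitary.linearIsometryEquiv ⟨toEuclideanCLM (𝕜 := ℝ) A, Unitary.map_mem _ hA⟩, b, hf⟩

theorem Finite.exists_forall_mem_Icc_of_forall_mem_Ioo {ι : Type*} [Finite ι] {κ : ι → ℝ}
    (hκ : ∀ i, κ i ∈ Ioo 0 1) : ∃ a b, 0 < a ∧ b < 1 ∧ ∀ i, κ i ∈ Icc a b := by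
  rcases isEmpty_or_nonempty ι with _ | _
  · exact ⟨1, 0, one_pos, zero_lt_one, isEmptyElim⟩
  · obtain ⟨i, hi⟩ := Finite.exists_min κ
    obtain ⟨j, hj⟩ := Finite.exists_max κ
    exact ⟨κ i, κ j, (hκ i).1, (hκ j).2, fun l => ⟨hi l, hj l⟩⟩

/-- Think of `P f r` as "`f` is a composition of the maps `h i` with ratio `r`". -/
theorem exists_ratio_mem_Ioc_of_eq_iUnion_image {α ι : Type*} {h : ι → α → α} {κ : ι → ℝ}
    {a b : ℝ} (ha : 0 < a) (hb : b < 1) (hκ : ∀ i, κ i ∈ Icc a b) {Δ : Set α}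
    (hΔ : Δ = ⋃ i, h i '' Δ) {P : (α → α) → ℝ → Prop} (hid : P id 1)
    (hcomp : ∀ f r i, P f r → P (f ∘ h i) (r * κ i)) {p : α} (hp : p ∈ Δ) {t : ℝ}
    (ht : t ∈ Ioo 0 1) : ∃ f r, P f r ∧ p ∈ f '' Δ ∧ r ∈ Ioc (a * t) t := by
  have descend : ∀ n : ℕ, ∀ f r, P f r → p ∈ f '' Δ → t < r → r * b ^ n ≤ t →
      ∃ f r, P f r ∧ p ∈ f '' Δ ∧ r ∈ Ioc (a * t) t := by
    intro n
    induction n with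
    | zero =>
      intro f r _ _ htr hrt
      rw [pow_zero, mul_one] at hrt
      exact absurd htr hrt.not_gt
    | succ n ih =>
      intro f r hfr hpf htr hrt
      obtain ⟨i, hpi⟩ : ∃ i, p ∈ (f ∘ h i) '' Δ := by
        rw [hΔ, image_iUnion, mem_iUnion] at hpf
        simpa only [image_comp] using hpf
      have hκi := hκ i
      have hr : 0 < r := ht.1.trans htr
      by_cases hstop : r * κ i ≤ t
      · have hlow : a * t < r * κ i :=
          (mul_lt_mul_of_pos_left htr ha).trans_le (by rw [mul_comm]; gcongr; exact hκi.1)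
        exact ⟨_, _, hcomp f r i hfr, hpi, hlow, hstop⟩
      · refine ih _ _ (hcomp f r i hfr) hpi (not_le.1 hstop) ?_
        have hbn : 0 ≤ b ^ n := pow_nonneg (ha.le.trans (hκi.1.trans hκi.2)) n
        calc r * κ i * b ^ n ≤ r * b * b ^ n := by gcongr; exact hκi.2
          _ = r * b ^ (n + 1) := by ring
          _ ≤ t := hrt
  obtain ⟨n, hn⟩ := exists_pow_lt_of_lt_one ht.1 hb
  exact descend n id 1 hid ⟨p, hp, rfl⟩ ht.2 (by rw [one_mul]; exact hn.le)

theorem exists_forall_le_volume_ball_diff {E : Type*} [NormedAddCommGroup E]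
    [InnerProductSpace ℝ E] [FiniteDimensional ℝ E] [MeasurableSpace E] [BorelSpace E]
    {ι : Type*} [Finite ι] {h : ι → E → E} {κ : ι → ℝ} (hκ : ∀ i, κ i ∈ Ioo 0 1)
    (hh : ∀ i, IsSimilarityWith (κ i) (h i)) {Δ : Set E} (hΔ : Δ = ⋃ i, h i '' Δ) {c₀ : E}
    {R : ℝ} (hR : 0 < R) (hΔU : Δ ⊆ closedBall c₀ R) {B : Set E} (hB : ∀ i, h i '' B = B)
    (hpos : 0 < volume (ball c₀ R \ B)) :
    ∃ c : ℝ, 0 < c ∧ ∀ p ∈ Δ, ∀ δ, 0 < δ → δ < 2 * R →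
      ENNReal.ofReal c * volume (ball p δ) ≤ volume (ball p δ \ B) := by
  obtain ⟨a, b, ha, hb, hκab⟩ := Finite.exists_forall_mem_Icc_of_forall_mem_Ioo hκ
  set d := finrank ℝ E
  set m := volume (ball c₀ R \ B)
  set v := volume (ball (0 : E) 1)
  have hv0 : v ≠ 0 := (measure_ball_pos _ _ one_pos).ne'
  have hvtop : v ≠ ⊤ := measure_ball_lt_top.ne
  have hmtop : m ≠ ⊤ := (measure_mono sdiff_subset).trans_lt measure_ball_lt_top |>.ne
  set C := ENNReal.ofReal ((a / (2 * R)) ^ d) * m / v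
  have hC0 : C ≠ 0 := by
    have hq : ENNReal.ofReal ((a / (2 * R)) ^ d) ≠ 0 := (ENNReal.ofReal_pos.2 (by positivity)).ne'
    exact (ENNReal.div_pos (ENNReal.mul_pos hq hpos.ne').ne' hvtop).ne'
  have hCtop : C ≠ ⊤ := ENNReal.div_ne_top (ENNReal.mul_ne_top ENNReal.ofReal_ne_top hmtop) hv0
  refine ⟨C.toReal, ENNReal.toReal_pos hC0 hCtop, fun p hp δ hδ hδR => ?_⟩
  have ht : δ / (2 * R) ∈ Ioo 0 1 := ⟨by positivity, (div_lt_one (by positivity)).2 hδR⟩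
  obtain ⟨f, r, ⟨hf, hfB⟩, hpf, hr⟩ := exists_ratio_mem_Ioc_of_eq_iUnion_image ha hb hκab hΔ
    (P := fun f r => IsSimilarityWith r f ∧ f '' B = B) ⟨IsSimilarityWith.id, image_id B⟩
    (fun f r i ⟨hf, hfB⟩ => ⟨hf.comp (hh i), by rw [image_comp, hB, hfB]⟩) hp ht
  have hr0 : 0 < r := lt_trans (by positivity) hr.1
  have hrδ : 2 * (r * R) ≤ δ := by
    linarith [(le_div_iff₀ (by positivity : (0 : ℝ) < 2 * R)).1 hr.2]
  calc ENNReal.ofReal C.toReal * volume (ball p δ)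
      = ENNReal.ofReal (δ ^ d) * (C * v) := by
        rw [ENNReal.ofReal_toReal hCtop, Measure.addHaar_ball_of_pos _ _ hδ]
        ring
    _ = ENNReal.ofReal ((a * (δ / (2 * R))) ^ d) * m := by
        rw [ENNReal.div_mul_cancel hv0 hvtop, ← mul_assoc, ← ENNReal.ofReal_mul (by positivity)]
        congr 2
        rw [mul_comm, ← mul_pow]
        ring
    _ ≤ ENNReal.ofReal (r ^ d) * m := by gcongr; exact hr.1.le
    _ ≤ volume (ball p δ \ B) := hf.volume_ball_diff_le hr0 hfB (image_mono hΔU hpf) hrδ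

theorem not_tendsto_measure_inter_div_nhds_one {α β : Type*} [MeasurableSpace α] {μ : Measure α}
    {B : Set α} (hB : MeasurableSet B) {l : Filter β} [l.NeBot] {s : β → Set α} {c : ENNReal}
    (hc : c ≠ 0) (hfin : ∀ᶠ x in l, μ (s x) ≠ ⊤) (hle : ∀ᶠ x in l, c * μ (s x) ≤ μ (s x \ B)) :
    ¬ Tendsto (fun x => μ (B ∩ s x) / μ (s x)) l (nhds 1) := by
  intro hT
  have hbound : ∀ᶠ x in l, μ (B ∩ s x) / μ (s x) ≤ 1 - c := by
    filter_upwards [hfin, hle] with x hx hcx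
    refine ENNReal.div_le_of_le_mul ?_
    calc μ (B ∩ s x) = μ (s x) - μ (s x \ B) := by
          rw [inter_comm]
          exact ENNReal.eq_sub_of_add_eq (ne_top_of_le_ne_top hx (measure_mono sdiff_subset))
            (measure_inter_add_sdiff _ hB)
      _ ≤ μ (s x) - c * μ (s x) := tsub_le_tsub_left hcx _
      _ = (1 - c) * μ (s x) := by rw [ENNReal.sub_mul fun _ _ => hx, one_mul]
  have hlt : 1 - c < 1 := ENNReal.sub_lt_self ENNReal.one_ne_top one_ne_zero hc
  obtain ⟨x, hx1, hx2⟩ := (hbound.and (hT.eventually (eventually_gt_nhds hlt))).exists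
  exact hx1.not_gt hx2

theorem stmt_11_general {k : ℕ}
    (κ : Fin k → ℝ) (hκ : ∀ i, κ i ∈ Ioo (0 : ℝ) 1)
    (A : Fin k → Matrix (Fin 2) (Fin 2) ℝ)
    (hA : ∀ i, A i ∈ Matrix.orthogonalGroup (Fin 2) ℝ)
    (b : Fin k → EuclideanSpace ℝ (Fin 2))
    (h : Fin k → EuclideanSpace ℝ (Fin 2) → EuclideanSpace ℝ (Fin 2))
    (hdef : ∀ i x, h i x = κ i • (Matrix.toEuclideanLin (A i)) x + b i)
    (c₀ : EuclideanSpace ℝ (Fin 2)) (R : ℝ) (hR : 0 < R)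
    (U : Set (EuclideanSpace ℝ (Fin 2))) (hU : U = Metric.ball c₀ R)
    (Δ : Set (EuclideanSpace ℝ (Fin 2)))
    (hΔfix : Δ = ⋃ i, h i '' Δ) (hΔU : Δ ⊆ closure U)
    (B : Set (EuclideanSpace ℝ (Fin 2))) (hB : MeasurableSet B)
    (hBinv : ∀ i, h i '' B = B)
    (hpos : 0 < volume (U \ B)) :
    (∀ p ∈ Δ, ¬ Tendsto
        (fun δ : ℝ => volume (B ∩ Metric.ball p δ) / volume (Metric.ball p δ))
        (nhdsWithin 0 (Ioi 0)) (nhds 1)) ∧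
    ∃ c : ℝ, 0 < c ∧ ∃ δ₀ : ℝ, 0 < δ₀ ∧ ∀ p ∈ Δ, ∀ δ : ℝ, 0 < δ → δ < δ₀ →
      ENNReal.ofReal c * volume (Metric.ball p δ) ≤ volume (Metric.ball p δ \ B) := by
  subst hU
  obtain ⟨c, hc, hcB⟩ := exists_forall_le_volume_ball_diff hκ
    (fun i => Matrix.isSimilarityWith_of_mem_orthogonalGroup (hA i) (hdef i)) hΔfix hR
    (hΔU.trans closure_ball_subset_closedBall) hBinv hpos
  refine ⟨fun p hp => ?_, c, hc, 2 * R, by positivity, hcB⟩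
  refine not_tendsto_measure_inter_div_nhds_one hB (ENNReal.ofReal_pos.2 hc).ne'
    (Eventually.of_forall fun _ => measure_ball_lt_top.ne) ?_
  filter_upwards [Ioo_mem_nhdsGT (by positivity : (0 : ℝ) < 2 * R)] with δ hδ
  exact hcB p hp δ hδ.1 hδ.2

/-- exclusion of Lebesgue density points on the attractor.  Let
`h i x = κ i • (A i) x + b i` be contracting similarities of the Euclidean plane
(`κ i ∈ (0,1)`, `A i` orthogonal), let `U` be an open ball with `h i '' U ⊆ U`, and let
`Δ ⊆ closure U` be the Hutchinson attractor.  If `B` is measurable with `h i '' B = B` for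
all `i` and `vol (U \ B) > 0`, then no `p ∈ Δ` is a Lebesgue density point of `B`; in fact
there is `c > 0` with `vol (ball p δ \ B) ≥ c ⬝ vol (ball p δ)` for all `p ∈ Δ` and all
sufficiently small `δ > 0`. -/
theorem stmt_11 {k : ℕ}
    (κ : Fin k → ℝ) (hκ : ∀ i, κ i ∈ Ioo (0 : ℝ) 1)
    (A : Fin k → Matrix (Fin 2) (Fin 2) ℝ)
    (hA : ∀ i, A i ∈ Matrix.orthogonalGroup (Fin 2) ℝ)
    (b : Fin k → EuclideanSpace ℝ (Fin 2))
    (h : Fin k → EuclideanSpace ℝ (Fin 2) → EuclideanSpace ℝ (Fin 2))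
    (hdef : ∀ i x, h i x = κ i • (Matrix.toEuclideanLin (A i)) x + b i)
    (c₀ : EuclideanSpace ℝ (Fin 2)) (R : ℝ) (hR : 0 < R)
    (U : Set (EuclideanSpace ℝ (Fin 2))) (hU : U = Metric.ball c₀ R)
    (hinv : ∀ i, h i '' U ⊆ U)
    (Δ : Set (EuclideanSpace ℝ (Fin 2))) (hΔne : Δ.Nonempty) (hΔc : IsCompact Δ)
    (hΔfix : Δ = ⋃ i, h i '' Δ) (hΔU : Δ ⊆ closure U)
    (B : Set (EuclideanSpace ℝ (Fin 2))) (hB : MeasurableSet B)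
    (hBinv : ∀ i, h i '' B = B)
    (hpos : 0 < volume (U \ B)) :
    (∀ p ∈ Δ, ¬ Tendsto
        (fun δ : ℝ => volume (B ∩ Metric.ball p δ) / volume (Metric.ball p δ))
        (nhdsWithin 0 (Ioi 0)) (nhds 1)) ∧
    ∃ c : ℝ, 0 < c ∧ ∃ δ₀ : ℝ, 0 < δ₀ ∧ ∀ p ∈ Δ, ∀ δ : ℝ, 0 < δ → δ < δ₀ →
      ENNReal.ofReal c * volume (Metric.ball p δ) ≤ volume (Metric.ball p δ \ B) :=
  stmt_11_general κ hκ A hA b h hdef c₀ R hR U hU Δ hΔfix hΔU B hB hBinv hpos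
end
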